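/- arXiv:1912.00115 — 6 statements merged into one kernel-verified Lean document; each statement's English description precedes it below -/
import Mathlib

section
/- The group presented by ⟨x, y | xyx = yxy, x² = y³⟩ is the trivial group. -/
/-!
If `a` and `b` satisfy the braid relation `aba = bab`, and `a²` commutes with `b`, then
`b a³ = a (aba) = a (bab) = (aba) b = b a b²`, so `a² = b²`. With `a² = b³` this forces
`b³ = b²`, hence `b = 1`, and then the braid relation reads `a² = a`, hence `a = 1`.
-/

section BraidRelation

variable {G : Type*} [Group G] {a b : G}

theorem sq_eq_sq_of_braid_of_commute (hbraid : a * b * a = b * a * b) (hc : Commute (a ^ 2) b) :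
    a ^ 2 = b ^ 2 := by
  have hcube : b * (a * a ^ 2) = b * (a * b ^ 2) :=
    calc b * (a * a ^ 2) = a ^ 2 * b * a := by rw [hc.eq]; simp only [sq, mul_assoc]
      _ = a * (a * b * a) := by simp only [sq, mul_assoc]
      _ = a * (b * a * b) := by rw [hbraid]
      _ = (a * b * a) * b := by simp only [mul_assoc]
      _ = (b * a * b) * b := by rw [hbraid]
      _ = b * (a * b ^ 2) := by simp only [sq, mul_assoc]
  exact mul_left_cancel (mul_left_cancel hcube)

theorem eq_one_of_braid_of_sq_eq_pow_three (hbraid : a * b * a = b * a * b) (h : a ^ 2 = b ^ 3) :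
    a = 1 ∧ b = 1 := by
  have hsq : a ^ 2 = b ^ 2 :=
    sq_eq_sq_of_braid_of_commute hbraid (h ▸ (Commute.self_pow b 3).symm)
  have hb : b = 1 := by
    have : b ^ 2 * b = b ^ 2 * 1 := by rw [mul_one, ← pow_succ, ← h, hsq]
    exact mul_left_cancel this
  refine ⟨?_, hb⟩
  have : a * a = a * 1 := by simpa [hb] using hbraid
  exact mul_left_cancel this

end BraidRelation

theorem PresentedGroup.subsingleton_of_forall_of_eq_one {α : Type*} {rels : Set (FreeGroup α)}
    (h : ∀ x : α, (PresentedGroup.of x : PresentedGroup rels) = 1) :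
    Subsingleton (PresentedGroup rels) :=
  subsingleton_of_forall_eq 1 fun g =>
    Subgroup.mem_bot.mp (PresentedGroup.generated_by rels ⊥ (fun x => (h x).symm ▸ one_mem _) g)

/-- The Akbulut–Kirby presentation ⟨x, y | xyx = yxy, x² = y³⟩ presents the trivial group. -/
theorem stmt_0 :
    Subsingleton (PresentedGroup
      ({FreeGroup.of true * FreeGroup.of false * FreeGroup.of true *
          (FreeGroup.of false * FreeGroup.of true * FreeGroup.of false)⁻¹,
        FreeGroup.of true ^ 2 * (FreeGroup.of false ^ 3)⁻¹} :
        Set (FreeGroup Bool))) := by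
  refine PresentedGroup.subsingleton_of_forall_of_eq_one (Bool.forall_bool.mpr ?_)
  refine (eq_one_of_braid_of_sq_eq_pow_three ?_ ?_).symm
  · exact eq_of_mul_inv_eq_one (PresentedGroup.one_of_mem (Set.mem_insert _ _))
  · exact eq_of_mul_inv_eq_one (PresentedGroup.one_of_mem (Set.mem_insert_of_mem _ rfl))
end

section
/- The group presented by ⟨x, y | x⁻¹y³x = y⁴, x = y⁻¹xyx⁻¹⟩ is the trivial group. -/
/-!
The second relation says that conjugation by `y` squares `x`, so conjugation by `y ^ n` raises
`x` to the power `2 ^ n`. Conjugating `x` by `y ^ 4 = x⁻¹ y ^ 3 x` therefore gives both `x ^ 16` and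
`x⁻¹ x ^ 8 x = x ^ 8`, whence `x ^ 8 = 1`; as `x ^ 8` is a conjugate of `x`, also `x = 1`, and then
`y ^ 3 = y ^ 4` forces `y = 1`.
-/

section Group

variable {G : Type*} [Group G] {x y : G}

theorem conj_pow_eq_pow_two_pow (h : y⁻¹ * x * y = x ^ 2) (n : ℕ) :
    (y ^ n)⁻¹ * x * y ^ n = x ^ 2 ^ n := by
  induction n with
  | zero => simp
  | succ n ih =>
    calc (y ^ (n + 1))⁻¹ * x * y ^ (n + 1) = y⁻¹ * ((y ^ n)⁻¹ * x * y ^ n) * y⁻¹⁻¹ := by group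
      _ = (y⁻¹ * x * y) ^ 2 ^ n := by rw [ih, ← conj_pow, inv_inv]
      _ = x ^ 2 ^ (n + 1) := by rw [h, ← pow_mul, pow_succ']

theorem eq_one_of_conj_eq_sq_of_conj_pow_three (hxy : y⁻¹ * x * y = x ^ 2)
    (hyx : x⁻¹ * y ^ 3 * x = y ^ 4) : x = 1 ∧ y = 1 := by
  have hx8 : (y ^ 3)⁻¹ * x * y ^ 3 = x ^ 8 := conj_pow_eq_pow_two_pow hxy 3
  have hx16 : x ^ 16 = x ^ 8 :=
    calc x ^ 16 = (y ^ 4)⁻¹ * x * y ^ 4 := (conj_pow_eq_pow_two_pow hxy 4).symm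
      _ = x⁻¹ * ((y ^ 3)⁻¹ * x * y ^ 3) * x := by rw [← hyx]; group
      _ = x ^ 8 := by rw [hx8]; group
  have h8 : x ^ 8 = 1 :=
    mul_left_cancel (a := x ^ 8) (by rw [← pow_add, mul_one]; exact hx16)
  have hx : x = 1 :=
    calc x = y ^ 3 * ((y ^ 3)⁻¹ * x * y ^ 3) * (y ^ 3)⁻¹ := by group
      _ = 1 := by rw [hx8, h8]; group
  refine ⟨hx, ?_⟩
  rw [hx] at hyx
  simpa [pow_succ] using hyx

end Group

theorem PresentedGroup.subsingleton_of_of_eq_one {α : Type*} {rels : Set (FreeGroup α)}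
    (h : ∀ a, PresentedGroup.of (rels := rels) a = 1) : Subsingleton (PresentedGroup rels) :=
  subsingleton_of_forall_eq 1 fun g ↦
    Subgroup.mem_bot.mp (PresentedGroup.generated_by rels ⊥ (fun a ↦ (h a).symm ▸ one_mem _) g)

/-- The Miller–Schupp presentation ⟨x, y | x⁻¹y³x = y⁴, x = y⁻¹xyx⁻¹⟩ presents the
trivial group. -/
theorem stmt_1 :
    Subsingleton (PresentedGroup
      ({(FreeGroup.of true)⁻¹ * FreeGroup.of false ^ 3 * FreeGroup.of true *
          (FreeGroup.of false ^ 4)⁻¹,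
        FreeGroup.of true *
          ((FreeGroup.of false)⁻¹ * FreeGroup.of true * FreeGroup.of false *
            (FreeGroup.of true)⁻¹)⁻¹} :
        Set (FreeGroup Bool))) := by
  refine PresentedGroup.subsingleton_of_of_eq_one (Bool.forall_bool.mpr ?_)
  refine (eq_one_of_conj_eq_sq_of_conj_pow_three ?_ ?_).symm
  -- `PresentedGroup.mk` is multiplicative by definition, so the relators apply up to `rfl`.
  · rw [sq, eq_comm, ← eq_mul_inv_iff_mul_eq]
    exact PresentedGroup.mk_eq_mk_of_mul_inv_mem (Set.mem_insert_of_mem _ rfl)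
  · exact PresentedGroup.mk_eq_mk_of_mul_inv_mem (Set.mem_insert _ _)
end

section
/- For every natural number n ≥ 1 and every word w in the free group F(x,y) with exponent sum 0 on x, the group presented by ⟨x, y | x⁻¹yⁿx = y^(n+1), x = w⟩ is the trivial group. -/
/-!
Write `X, Y` for the images of `x, y`. Since `X⁻¹ Yⁿᵏ X = Y⁽ⁿ⁺¹⁾ᵏ`, conjugation by a word with `p`
letters `x` and `q` letters `x⁻¹` carries `Y ^ (nᵖ (n+1)^q k)` to `Y ^ (n^q (n+1)ᵖ k)`, and padding
`(p, q)` to `(p + 1, q + 1)` is harmless, so only the exponent sum `p - q` matters. For `w` it is `0`,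
so `X = w` centralises `Y ^ (nᶜ (n+1)ᶜ k)`, while the relator multiplies that exponent by
`(n+1)/n`: hence `Y ^ (nᶜ (n+1)ᶜ) = 1`. As `Yⁿᵏ = 1 ↔ Y⁽ⁿ⁺¹⁾ᵏ = 1`, both `Y ^ n²ᶜ` and
`Y ^ (n+1)²ᶜ` vanish, and coprimality gives `Y = 1`. Finally `X = w(X, 1) = X⁰ = 1`.
-/

open FreeGroup

namespace FreeGroup

variable {α : Type*} [DecidableEq α]

def exponentSum (a : α) : FreeGroup α →* Multiplicative ℤ :=
  lift fun b => if b = a then Multiplicative.ofAdd 1 else 1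

end FreeGroup

namespace MillerSchupp

variable {G : Type*} [Group G]

def ConjScalesPowers (a b : ℤ) (Y g : G) (p q : ℕ) : Prop :=
  ∀ k : ℤ, g⁻¹ * Y ^ (a ^ p * b ^ q * k) * g = Y ^ (a ^ q * b ^ p * k)

variable {a b : ℤ} {X Y g h : G} {p q p' q' : ℕ}

theorem conjScalesPowers_one : ConjScalesPowers a b Y 1 0 0 := by
  simp [ConjScalesPowers]

theorem conjScalesPowers_self : ConjScalesPowers a b Y Y 0 0 := fun k => by
  group

theorem conjScalesPowers_of_conj_eq (hrel : X⁻¹ * Y ^ a * X = Y ^ b) :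
    ConjScalesPowers a b Y X 1 0 := fun k => by
  simpa [zpow_mul, hrel] using (conj_zpow (a := X⁻¹) (b := Y ^ a) (i := k)).symm

namespace ConjScalesPowers

theorem inv (hg : ConjScalesPowers a b Y g p q) : ConjScalesPowers a b Y g⁻¹ q p := fun k => by
  rw [← hg k]
  group

theorem mul (hg : ConjScalesPowers a b Y g p q) (hh : ConjScalesPowers a b Y h p' q') :
    ConjScalesPowers a b Y (g * h) (p + p') (q + q') := fun k => by
  calc (g * h)⁻¹ * Y ^ (a ^ (p + p') * b ^ (q + q') * k) * (g * h)
      = h⁻¹ * (g⁻¹ * Y ^ (a ^ p * b ^ q * (a ^ p' * b ^ q' * k)) * g) * h := by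
        simp only [mul_inv_rev, mul_assoc, pow_add, mul_left_comm]
    _ = Y ^ (a ^ (q + q') * b ^ (p + p') * k) := by
        rw [hg, show a ^ q * b ^ p * (a ^ p' * b ^ q' * k) = a ^ p' * b ^ q' * (a ^ q * b ^ p * k) by
          ring, hh]
        congr 1
        ring

theorem add_add (hg : ConjScalesPowers a b Y g p q) (j : ℕ) :
    ConjScalesPowers a b Y g (p + j) (q + j) := fun k => by
  simpa [pow_add, mul_assoc, mul_left_comm, mul_comm] using hg (a ^ j * b ^ j * k)

end ConjScalesPowers

theorem exists_conjScalesPowers (φ : FreeGroup Bool →* G)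
    (hrel : (φ (of true))⁻¹ * φ (of false) ^ a * φ (of true) = φ (of false) ^ b)
    (u : FreeGroup Bool) :
    ∃ p q : ℕ, (p : ℤ) - q = (exponentSum true u).toAdd ∧
      ConjScalesPowers a b (φ (of false)) (φ u) p q := by
  induction u using FreeGroup.induction_on with
  | C1 => exact ⟨0, 0, by simp, by simpa using conjScalesPowers_one⟩
  | of x =>
    cases x
    · exact ⟨0, 0, by simp [exponentSum], conjScalesPowers_self⟩
    · exact ⟨1, 0, by simp [exponentSum], conjScalesPowers_of_conj_eq hrel⟩
  | inv_of x ih =>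
    obtain ⟨p, q, hpq, hx⟩ := ih
    exact ⟨q, p, by simp [← hpq], by simpa using hx.inv⟩
  | mul u v hu hv =>
    obtain ⟨p, q, hpq, hu⟩ := hu
    obtain ⟨p', q', hpq', hv⟩ := hv
    exact ⟨p + p', q + q', by push_cast; simp [← hpq, ← hpq']; ring, by simpa using hu.mul hv⟩

theorem ConjScalesPowers.zpow_eq_one (h₁ : ConjScalesPowers a b Y X 1 0)
    (h₀ : ConjScalesPowers a b Y X p p) : Y ^ (a ^ p * b ^ p * (b - a)) = 1 := by
  have hshift : X⁻¹ * Y ^ (a ^ p * b ^ p * a) * X = Y ^ (a ^ p * b ^ p * b) := by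
    simpa [pow_add, mul_comm, mul_left_comm, mul_assoc] using h₁.add_add p 1
  have hfix : X⁻¹ * Y ^ (a ^ p * b ^ p * a) * X = Y ^ (a ^ p * b ^ p * a) := h₀ a
  rw [mul_sub, zpow_sub, ← hshift, hfix, mul_inv_cancel]

theorem zpow_pow_mul_eq_one (h : ∀ k : ℤ, Y ^ (a * k) = 1 → Y ^ (b * k) = 1) (i : ℕ) {m : ℤ}
    (hm : Y ^ (a ^ i * m) = 1) : Y ^ (b ^ i * m) = 1 := by
  induction i generalizing m with
  | zero => simpa using hm
  | succ i ih =>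
    have hb : Y ^ (b * (a ^ i * m)) = 1 := h _ (by rwa [← mul_assoc, ← pow_succ'])
    rw [pow_succ, mul_assoc]
    exact ih (by rwa [mul_left_comm])

theorem ConjScalesPowers.zpow_mul_eq_one_iff (h₁ : ConjScalesPowers a b Y X 1 0) (k : ℤ) :
    Y ^ (a * k) = 1 ↔ Y ^ (b * k) = 1 := by
  have hk : X⁻¹ * Y ^ (a * k) * X = Y ^ (b * k) := by simpa using h₁ k
  rw [← hk, ← conj_eq_one_iff (a := X⁻¹), inv_inv]

theorem eq_one_of_zpow_eq_one_of_isCoprime (hab : IsCoprime a b) (ha : Y ^ a = 1)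
    (hb : Y ^ b = 1) : Y = 1 := by
  rw [← orderOf_dvd_iff_zpow_eq_one] at ha hb
  rw [← orderOf_eq_one_iff, ← Nat.isUnit_iff, ← Int.ofNat_isUnit]
  exact hab.isUnit_of_dvd' ha hb

theorem eval_eq_zpow_exponentSum (φ : FreeGroup Bool →* G) (hY : φ (of false) = 1)
    (u : FreeGroup Bool) : φ u = φ (of true) ^ (exponentSum true u).toAdd := by
  have : φ = (zpowersHom G (φ (of true))).comp (exponentSum true) :=
    FreeGroup.ext_hom _ _ fun x => by cases x <;> simp [exponentSum, hY]
  exact congrArg (· u) this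

theorem eq_one_of_conj_eq_of_exponentSum_eq_one (φ : FreeGroup Bool →* G) {n : ℤ}
    (hrel : (φ (of true))⁻¹ * φ (of false) ^ n * φ (of true) = φ (of false) ^ (n + 1))
    {w : FreeGroup Bool} (hw : exponentSum true w = 1) (hwX : φ w = φ (of true)) : φ = 1 := by
  set X := φ (of true)
  set Y := φ (of false)
  have h₁ := conjScalesPowers_of_conj_eq hrel
  obtain ⟨p, q, hpq, h₀⟩ := exists_conjScalesPowers φ hrel w
  obtain rfl : p = q := by simpa [hw, sub_eq_zero] using hpq
  have hY₀ : Y ^ (n ^ p * (n + 1) ^ p) = 1 := by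
    simpa using h₁.zpow_eq_one (hwX ▸ h₀)
  have hY : Y = 1 := by
    refine eq_one_of_zpow_eq_one_of_isCoprime (a := n ^ (p + p)) (b := (n + 1) ^ (p + p))
      (IsCoprime.pow ⟨-1, 1, by ring⟩) ?_ ?_
    · simpa [pow_add, mul_comm] using
        zpow_pow_mul_eq_one (fun k => (h₁.zpow_mul_eq_one_iff k).2) p (by rwa [mul_comm])
    · simpa [pow_add] using zpow_pow_mul_eq_one (fun k => (h₁.zpow_mul_eq_one_iff k).1) p hY₀
  have hX : X = 1 := by
    rw [← hwX, eval_eq_zpow_exponentSum φ hY, hw, toAdd_one, zpow_zero]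
  exact FreeGroup.ext_hom _ _ fun | true => hX | false => hY

theorem subsingleton_presentedGroup {rels : Set (FreeGroup Bool)} {n : ℕ} {w : FreeGroup Bool}
    (hw : exponentSum true w = 1)
    (hrel : (of true)⁻¹ * of false ^ n * of true * (of false ^ (n + 1))⁻¹ ∈ rels)
    (hwX : of true * w⁻¹ ∈ rels) : Subsingleton (PresentedGroup rels) := by
  have hmk := eq_one_of_conj_eq_of_exponentSum_eq_one _ (n := n)
    (by exact_mod_cast PresentedGroup.mk_eq_mk_of_mul_inv_mem hrel) hw
    (PresentedGroup.mk_eq_mk_of_mul_inv_mem hwX).symm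
  refine ⟨fun g₁ g₂ => ?_⟩
  obtain ⟨u₁, rfl⟩ := PresentedGroup.mk_surjective _ g₁
  obtain ⟨u₂, rfl⟩ := PresentedGroup.mk_surjective _ g₂
  simp [hmk]

end MillerSchupp

theorem stmt_3_general (n : ℕ) (w : FreeGroup Bool)
    (hw : FreeGroup.lift
      (fun b => if b then Multiplicative.ofAdd (1 : ℤ) else Multiplicative.ofAdd 0) w = 1) :
    Subsingleton (PresentedGroup
      ({(FreeGroup.of true)⁻¹ * FreeGroup.of false ^ n * FreeGroup.of true *
          (FreeGroup.of false ^ (n + 1))⁻¹,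
        FreeGroup.of true * w⁻¹} :
        Set (FreeGroup Bool))) :=
  MillerSchupp.subsingleton_presentedGroup hw (Set.mem_insert _ _) (Set.mem_insert_of_mem _ rfl)

/-- For every n ≥ 1 and every word w in F(x, y) with exponent sum 0 on x, the
Miller–Schupp presentation ⟨x, y | x⁻¹yⁿx = yⁿ⁺¹, x = w⟩ presents the trivial group.
Here `true` plays the role of x and `false` of y, and the exponent-sum condition is
that the homomorphism F(x,y) → ℤ with x ↦ 1, y ↦ 0 kills w. -/
theorem stmt_3 (n : ℕ) (hn : 1 ≤ n) (w : FreeGroup Bool)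
    (hw : FreeGroup.lift
      (fun b => if b then Multiplicative.ofAdd (1 : ℤ) else Multiplicative.ofAdd 0) w = 1) :
    Subsingleton (PresentedGroup
      ({(FreeGroup.of true)⁻¹ * FreeGroup.of false ^ n * FreeGroup.of true *
          (FreeGroup.of false ^ (n + 1))⁻¹,
        FreeGroup.of true * w⁻¹} :
        Set (FreeGroup Bool))) :=
  stmt_3_general n w hw
end

section
/- Let K be a finite regular CW-complex and let M be a matching on the pairs (v, e) where v is a 0-cell and e is a 1-cell of K with v a face of e, such that exactly one 0-cell is unmatched. Let T be the subgraph of the 1-skeleton of K consisting of all matched cells (with their closures). Then M is acyclic (i.e., the directed graph obtained from the Hasse diagram of the face poset by reversing the edges of matched pairs has no directed cycle) if and only if T is a spanning tree of the 1-skeleton of K. -/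
/-!
Write `v ⟶ w` (`GradientStep`) when `v` is matched with an edge whose other endpoint is `w`.
Each vertex other than the unmatched vertex `u` has exactly one such successor and `u` has none,
and the matched edges are exactly the edges `{v, w}` with `v ⟶ w`. A directed cycle of the
modified Hasse diagram alternates between vertices and their matched edges, so it is a cycle
of `⟶`.

If `⟶` has no cycle, every vertex flows to `u`, so the matched edges form a connected graph with
`|V| - 1` edges, i.e. a tree. Conversely, if the matched edges form a connected graph, every
vertex flows to `u`; a cycle of the functional relation `⟶` would contain everything downstream
of it, including `u`, which has no successor.
-/

open Relation SimpleGraph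

namespace Relation

variable {V : Type*} {D : V → V → Prop}

theorem TransGen.self_of_reflTransGen (hD : Relator.RightUnique D) {v w : V}
    (hv : TransGen D v v) (hvw : ReflTransGen D v w) : TransGen D w w := by
  induction hvw with
  | refl => exact hv
  | tail _ hbc ih =>
    obtain ⟨c, hbc', hcb⟩ := TransGen.head'_iff.1 ih
    exact TransGen.tail' (hD hbc' hbc ▸ hcb) hbc

section Rooted

variable (u : V)

theorem reflTransGen_root_of_acyclic [Finite V] (hroot : ∀ v, (∃ w, D v w) ↔ v ≠ u)
    (hacyc : ∀ v, ¬ TransGen D v v) (v : V) :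
    ReflTransGen D v u := by
  have : IsTrans V (flip (TransGen D)) := ⟨fun _ _ _ hab hbc => hbc.trans hab⟩
  have : Std.Irrefl (flip (TransGen D)) := ⟨hacyc⟩
  induction v using (Finite.wellFounded_of_trans_of_irrefl (flip (TransGen D))).induction with
  | _ v ih =>
    by_cases hvu : v = u
    · exact hvu ▸ .refl
    · obtain ⟨w, hvw⟩ := (hroot v).2 hvu
      exact .head hvw (ih w (.single hvw))

theorem reflTransGen_root_of_connected (hroot : ∀ v, (∃ w, D v w) ↔ v ≠ u)
    (hD : Relator.RightUnique D) (hconn : (fromRel D).Connected) (v : V) : ReflTransGen D v u := by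
  have hadj : ∀ x y, (fromRel D).Adj x y → ReflTransGen D y u → ReflTransGen D x u := by
    rintro x y ⟨-, hxy | hyx⟩ hy
    · exact .head hxy hy
    · rcases hy.cases_head with rfl | ⟨x', hyx', hx'u⟩
      · exact absurd rfl ((hroot y).1 ⟨x, hyx⟩)
      · exact hD hyx' hyx ▸ hx'u
  induction (reachable_iff_reflTransGen v u).1 (hconn v u)
    using ReflTransGen.head_induction_on with
  | refl => exact .refl
  | head h _ ih => exact hadj _ _ h ih

theorem connected_fromRel_of_reflTransGen_root (h : ∀ v, ReflTransGen D v u) :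
    (fromRel D).Connected := by
  have hstep : ∀ a b, D a b → ReflTransGen (fromRel D).Adj a b := fun a b hab => by
    by_cases hab' : a = b
    · exact hab' ▸ .refl
    · exact .single ⟨hab', .inl hab⟩
  have hreach : ∀ v, (fromRel D).Reachable v u := fun v =>
    (reachable_iff_reflTransGen v u).2 ((h v).lift' id hstep)
  exact connected_iff _ |>.2 ⟨fun x y => (hreach x).trans (hreach y).symm, ⟨u⟩⟩

theorem card_edgeSet_fromRel_add_one [Finite V] (hroot : ∀ v, (∃ w, D v w) ↔ v ≠ u)
    (hD : Relator.RightUnique D) (hasymm : ∀ v w, D v w → ¬ D w v) :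
    Nat.card (fromRel D).edgeSet + 1 = Nat.card V := by
  choose p hp using fun v : {v // v ≠ u} => (hroot v).2 v.2
  have hadj : ∀ v : {v // v ≠ u}, (fromRel D).Adj v (p v) := fun v =>
    ⟨fun h => hasymm _ _ (hp v) (by simpa [h] using hp v), .inl (hp v)⟩
  let f : {v // v ≠ u} → (fromRel D).edgeSet := fun v =>
    ⟨s(v, p v), (mem_edgeSet _).2 (hadj v)⟩
  have hf : Function.Bijective f := by
    refine ⟨fun v w hvw => ?_, fun ⟨e, he⟩ => ?_⟩
    · rcases Sym2.eq_iff.1 (Subtype.ext_iff.1 hvw) with ⟨h, -⟩ | ⟨h₁, h₂⟩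
      · exact Subtype.ext h
      · exact absurd (h₁ ▸ hp w) (hasymm _ _ (h₂ ▸ hp v))
    induction e using Sym2.ind with
    | _ x y =>
      obtain ⟨-, hxy | hyx⟩ := (mem_edgeSet _).1 he
      · have hx : x ≠ u := (hroot x).1 ⟨y, hxy⟩
        exact ⟨⟨x, hx⟩, Subtype.ext (by simp only [f, hD (hp ⟨x, hx⟩) hxy])⟩
      · have hy : y ≠ u := (hroot y).1 ⟨x, hyx⟩
        exact ⟨⟨y, hy⟩, Subtype.ext (by
          simp only [f, hD (hp ⟨y, hy⟩) hyx, Sym2.eq_swap])⟩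
  classical
  rw [← Nat.card_eq_of_bijective f hf, ← Finite.card_option,
    Nat.card_congr (Equiv.optionSubtypeNe u)]

theorem isTree_fromRel_iff_acyclic [Finite V] (hroot : ∀ v, (∃ w, D v w) ↔ v ≠ u)
    (hD : Relator.RightUnique D) :
    (fromRel D).IsTree ↔ ∀ v, ¬ TransGen D v v := by
  refine ⟨fun htree v hv => ?_, fun hacyc => ?_⟩
  · have hu := hv.self_of_reflTransGen hD (reflTransGen_root_of_connected u hroot hD htree.1 v)
    obtain ⟨w, huw, -⟩ := TransGen.head'_iff.1 hu
    exact (hroot u).1 ⟨w, huw⟩ rfl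
  · have hreach := reflTransGen_root_of_acyclic u hroot hacyc
    rw [isTree_iff_connected_and_card]
    exact ⟨connected_fromRel_of_reflTransGen_root u hreach,
      card_edgeSet_fromRel_add_one u hroot hD fun v w hvw hwv =>
        hacyc v (.tail (.single hvw) hwv)⟩

end Rooted

end Relation

section Matching

variable {V : Type*} {G : SimpleGraph V} {M : Set (V × Sym2 V)}

inductive ModifiedHasse (G : SimpleGraph V) (M : Set (V × Sym2 V)) :
    V ⊕ Sym2 V → V ⊕ Sym2 V → Prop
  | face {v : V} {e : Sym2 V} : e ∈ G.edgeSet → v ∈ e → (v, e) ∉ M →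
      ModifiedHasse G M (.inr e) (.inl v)
  | matched {v : V} {e : Sym2 V} : (v, e) ∈ M → ModifiedHasse G M (.inl v) (.inr e)

theorem modifiedHasse_iff {a b : V ⊕ Sym2 V} :
    ModifiedHasse G M a b ↔
      (∃ v e, a = .inr e ∧ b = .inl v ∧ e ∈ G.edgeSet ∧ v ∈ e ∧ (v, e) ∉ M) ∨
        ∃ v e, a = .inl v ∧ b = .inr e ∧ (v, e) ∈ M := by
  constructor
  · rintro (⟨he, hve, hvM⟩ | hM)
    exacts [.inl ⟨_, _, rfl, rfl, he, hve, hvM⟩, .inr ⟨_, _, rfl, rfl, hM⟩]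
  · rintro (⟨v, e, rfl, rfl, he, hve, hvM⟩ | ⟨v, e, rfl, rfl, hM⟩)
    exacts [.face he hve hvM, .matched hM]

def GradientStep (M : Set (V × Sym2 V)) (v w : V) : Prop :=
  ∃ e, (v, e) ∈ M ∧ w ∈ e ∧ w ≠ v

theorem gradientStep_rightUnique (hmem : ∀ p ∈ M, p.1 ∈ p.2)
    (hMv : ∀ v e e', (v, e) ∈ M → (v, e') ∈ M → e = e') :
    Relator.RightUnique (GradientStep M) := by
  rintro v w w' ⟨e, he, hwe, hwv⟩ ⟨e', he', hw'e, hw'v⟩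
  obtain rfl := hMv v e e' he he'
  have h₁ := (Sym2.mem_and_mem_iff hwv.symm).1 ⟨hmem _ he, hwe⟩
  have h₂ := (Sym2.mem_and_mem_iff hw'v.symm).1 ⟨hmem _ he, hw'e⟩
  exact Sym2.congr_right.1 (h₁.symm.trans h₂)

theorem exists_gradientStep_iff_ne (hM : ∀ p ∈ M, p.2 ∈ G.edgeSet ∧ p.1 ∈ p.2) {u : V}
    (hu : ∀ e, (u, e) ∉ M) (huniq : ∀ v, (∀ e, (v, e) ∉ M) → v = u) (v : V) :
    (∃ w, GradientStep M v w) ↔ v ≠ u := by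
  constructor
  · rintro ⟨w, e, he, -⟩ rfl
    exact hu e he
  · intro hvu
    obtain ⟨e, he⟩ : ∃ e, (v, e) ∈ M := by
      by_contra! h
      exact hvu (huniq v h)
    have hve := (hM _ he).2
    exact ⟨_, e, he, Sym2.other_mem hve,
      Sym2.other_ne (G.not_isDiag_of_mem_edgeSet (hM _ he).1) hve⟩

theorem fromRel_gradientStep (hmem : ∀ p ∈ M, p.1 ∈ p.2) :
    fromRel (GradientStep M) = fromEdgeSet {e | ∃ v, (v, e) ∈ M} := by
  ext x y
  rw [fromRel_adj, fromEdgeSet_adj]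
  constructor
  · rintro ⟨hxy, ⟨e, he, hye, -⟩ | ⟨e, he, hxe, -⟩⟩
    · exact ⟨⟨x, (Sym2.mem_and_mem_iff hxy).1 ⟨hmem _ he, hye⟩ ▸ he⟩, hxy⟩
    · exact ⟨⟨y, (Sym2.mem_and_mem_iff hxy).1 ⟨hxe, hmem _ he⟩ ▸ he⟩, hxy⟩
  · rintro ⟨⟨v, hv⟩, hxy⟩
    rcases Sym2.mem_iff.1 (hmem _ hv) with h | h <;> simp only at h <;> subst h
    · exact ⟨hxy, .inl ⟨_, hv, Sym2.mem_mk_right _ _, hxy.symm⟩⟩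
    · exact ⟨hxy, .inr ⟨_, hv, Sym2.mem_mk_left _ _, hxy⟩⟩

theorem transGen_modifiedHasse_of_gradientStep (hM : ∀ p ∈ M, p.2 ∈ G.edgeSet ∧ p.1 ∈ p.2)
    (hMe : ∀ v v' e, (v, e) ∈ M → (v', e) ∈ M → v = v') {v w : V}
    (h : GradientStep M v w) :
    TransGen (ModifiedHasse G M) (.inl v) (.inl w) := by
  obtain ⟨e, he, hwe, hwv⟩ := h
  exact .head (.matched he) (.single (.face (hM _ he).1 hwe fun hw => hwv (hMe _ _ _ hw he)))

theorem gradientStep_of_transGen_modifiedHasse {v : V} {b : V ⊕ Sym2 V}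
    (h : TransGen (ModifiedHasse G M) (.inl v) b) :
    b.elim (TransGen (GradientStep M) v)
      fun e => ∃ w, ReflTransGen (GradientStep M) v w ∧ (w, e) ∈ M := by
  induction h with
  | single h =>
    cases h with
    | matched he => exact ⟨v, .refl, he⟩
  | tail _ h ih =>
    cases h with
    | face _ hxe hxM =>
      obtain ⟨w, hvw, hwe⟩ := ih
      exact TransGen.tail' hvw ⟨_, hwe, hxe, fun hxw => hxM (hxw ▸ hwe)⟩
    | matched he => exact ⟨_, ih.to_reflTransGen, he⟩

theorem acyclic_modifiedHasse_iff (hM : ∀ p ∈ M, p.2 ∈ G.edgeSet ∧ p.1 ∈ p.2)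
    (hMe : ∀ v v' e, (v, e) ∈ M → (v', e) ∈ M → v = v') :
    (∀ c, ¬ TransGen (ModifiedHasse G M) c c) ↔ ∀ v, ¬ TransGen (GradientStep M) v v := by
  refine ⟨fun h v hv => h _ (hv.lift' Sum.inl fun _ _ =>
    transGen_modifiedHasse_of_gradientStep hM hMe), fun h c hc => ?_⟩
  obtain ⟨v, hv⟩ : ∃ v, TransGen (ModifiedHasse G M) (.inl v) (.inl v) := by
    obtain ⟨b, hcb, hbc⟩ := TransGen.head'_iff.1 hc
    cases hcb with
    | face he hve hvM => exact ⟨_, TransGen.tail' hbc (.face he hve hvM)⟩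
    | matched _ => exact ⟨_, hc⟩
  exact h v (gradientStep_of_transGen_modifiedHasse hv)

end Matching

theorem stmt_11_general {V : Type*} [Fintype V] (G : SimpleGraph V)
    (M : Set (V × Sym2 V))
    (hMinc : ∀ p ∈ M, p.2 ∈ G.edgeSet ∧ p.1 ∈ p.2)
    (hMv : ∀ v e e', (v, e) ∈ M → (v, e') ∈ M → e = e')
    (hMe : ∀ v v' e, (v, e) ∈ M → (v', e) ∈ M → v = v')
    (hone : ∃! v : V, ∀ e, (v, e) ∉ M)
    (step : (V ⊕ Sym2 V) → (V ⊕ Sym2 V) → Prop)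
    (hstep : ∀ a b, step a b ↔
      ((∃ v e, a = Sum.inr e ∧ b = Sum.inl v ∧ e ∈ G.edgeSet ∧ v ∈ e ∧ (v, e) ∉ M) ∨
       (∃ v e, a = Sum.inl v ∧ b = Sum.inr e ∧ (v, e) ∈ M))) :
    (∀ c, ¬ Relation.TransGen step c c) ↔
      (SimpleGraph.fromEdgeSet {e | ∃ v, (v, e) ∈ M}).IsTree := by
  obtain ⟨u, hu, huniq⟩ := hone
  have hmem : ∀ p ∈ M, p.1 ∈ p.2 := fun p hp => (hMinc p hp).2
  obtain rfl : step = ModifiedHasse G M :=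
    funext₂ fun a b => propext ((hstep a b).trans modifiedHasse_iff.symm)
  rw [acyclic_modifiedHasse_iff hMinc hMe, ← fromRel_gradientStep hmem,
    isTree_fromRel_iff_acyclic u (exists_gradientStep_iff_ne hMinc hu huniq)
      (gradientStep_rightUnique hmem hMv)]

/-- Matchings between vertices and edges with a single unmatched vertex:
the matching is acyclic (no directed cycle in the incidence digraph where matched
vertex–edge pairs are traversed upwards and unmatched incidences downwards) if and
only if the set of matched edges forms a spanning tree of the (connected) graph G. -/
theorem stmt_11 {V : Type*} [Fintype V] (G : SimpleGraph V) (hG : G.Connected)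
    (M : Set (V × Sym2 V))
    (hMinc : ∀ p ∈ M, p.2 ∈ G.edgeSet ∧ p.1 ∈ p.2)
    (hMv : ∀ v e e', (v, e) ∈ M → (v, e') ∈ M → e = e')
    (hMe : ∀ v v' e, (v, e) ∈ M → (v', e) ∈ M → v = v')
    (hone : ∃! v : V, ∀ e, (v, e) ∉ M)
    (step : (V ⊕ Sym2 V) → (V ⊕ Sym2 V) → Prop)
    (hstep : ∀ a b, step a b ↔
      ((∃ v e, a = Sum.inr e ∧ b = Sum.inl v ∧ e ∈ G.edgeSet ∧ v ∈ e ∧ (v, e) ∉ M) ∨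
       (∃ v e, a = Sum.inl v ∧ b = Sum.inr e ∧ (v, e) ∈ M))) :
    (∀ c, ¬ Relation.TransGen step c c) ↔
      (SimpleGraph.fromEdgeSet {e | ∃ v, (v, e) ∈ M}).IsTree :=
  stmt_11_general G M hMinc hMv hMe hone step hstep
end

section
/- Let P be a finite graded poset (every element has a well-defined dimension/rank) and M an acyclic matching on P. Then there exists a linear extension L of the order induced by the directed acyclic graph H_M(P) such that matched pairs appear consecutively in L and, moreover, L refines the order by rank among matched pairs: if (a,b) and (a',b') are matched pairs with (a',b') preceding (a,b) in L, then rank(b') ≤ rank(b). -/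
/-!
Contract every matched pair `(a, b)` to its top `b`. Order these class representatives by rank,
and within one rank against the paths of `H_M(P)`; this is a strict order because `H_M(P)` is
acyclic. An unmatched cover `a ⋖ b` never goes backwards in it: the rank of the top of the class
of `b` is at least that of `a`'s, and if they agree then `a` is matched upwards to some `a'`, and
`b → a → a'` is a path of `H_M(P)`. Listing the classes along an injective ranking of this order,
each pair as bottom then top, gives the extension; the rank condition holds because the classes
were listed by rank first.
-/

open Finset Function Relation

section Position

variable {α β : Type*} [Fintype α] [LinearOrder β] {key : α → β} {x y : α}

def position (key : α → β) (x : α) : ℕ := #{z | key z < key x}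

lemma position_lt_position (h : key x < key y) : position key x < position key y := by
  refine card_lt_card ((ssubset_iff_of_subset fun z hz => ?_).2 ⟨x, ?_, ?_⟩)
  · simp only [mem_filter, mem_univ, true_and] at hz ⊢
    exact hz.trans h
  all_goals simp [h]

lemma position_injective (hkey : Injective key) : Injective (position key) := fun _ _ h =>
  hkey <| le_antisymm (not_lt.1 fun h' => (position_lt_position h').ne' h)
    (not_lt.1 fun h' => (position_lt_position h').ne h)

lemma position_eq_add_one_of_covBy (hkey : Injective key) (h : key x ⋖ key y) :
    position key y = position key x + 1 := by
  classical
  have hfilter : filter (fun z => key z < key y) univ =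
      insert x (filter (fun z => key z < key x) univ) := by
    ext z
    simp only [mem_filter, mem_univ, true_and, mem_insert]
    refine ⟨fun hz => ?_, ?_⟩
    · rcases lt_trichotomy (key z) (key x) with hzx | hzx | hzx
      · exact Or.inr hzx
      · exact Or.inl (hkey hzx)
      · exact (h.2 hzx hz).elim
    · rintro (rfl | hz)
      exacts [h.1, hz.trans h.1]
  rw [position, position, hfilter, card_insert_of_notMem (by simp)]

end Position

theorem exists_injective_nat_of_isStrictOrder {α : Type*} [Fintype α]
    (r : α → α → Prop) [IsStrictOrder α r] :
    ∃ g : α → ℕ, Injective g ∧ ∀ ⦃u v⦄, r u v → g u < g v := by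
  classical
  obtain ⟨ι, hι⟩ := Countable.exists_injective_nat α
  let depth (u : α) : ℕ := #{w | r w u}
  have depth_lt {u v : α} (h : r u v) : depth u < depth v := by
    refine card_lt_card ((ssubset_iff_of_subset fun w hw => ?_).2 ⟨u, ?_, ?_⟩)
    · simp only [mem_filter, mem_univ, true_and] at hw ⊢
      exact trans_of r hw h
    all_goals simp [h, irrefl_of r u]
  refine ⟨position fun u => toLex (depth u, ι u), position_injective fun u v h => ?_,
    fun u v h => position_lt_position (Prod.Lex.toLex_lt_toLex.2 (Or.inl (depth_lt h)))⟩
  exact hι (congrArg (fun p => (ofLex p).2) h)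

section Matching

variable {P : Type*} {M : Set (P × P)}

noncomputable def matchTop (M : Set (P × P)) (x : P) : P :=
  open Classical in if h : ∃ b, (x, b) ∈ M then h.choose else x

lemma matchTop_eq_self_or_mem (x : P) : matchTop M x = x ∨ (x, matchTop M x) ∈ M := by
  unfold matchTop
  split_ifs with h
  exacts [Or.inr h.choose_spec, Or.inl rfl]

lemma matchTop_eq_of_mem (hM1 : ∀ a b b', (a, b) ∈ M → (a, b') ∈ M → b = b') {a b : P}
    (hab : (a, b) ∈ M) : matchTop M a = b := by
  have h : ∃ b', (a, b') ∈ M := ⟨b, hab⟩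
  rw [matchTop, dif_pos h]
  exact hM1 a _ b h.choose_spec hab

lemma matchTop_eq_self_of_mem (hM3 : ∀ a b c, (a, b) ∈ M → (b, c) ∈ M → False) {a b : P}
    (hab : (a, b) ∈ M) : matchTop M b = b := by
  rw [matchTop, dif_neg]
  rintro ⟨c, hbc⟩
  exact hM3 a b c hab hbc

lemma injective_matchTop_rk [PartialOrder P] {rk : P → ℕ} (hrk : ∀ a b : P, a ⋖ b → rk b = rk a + 1)
    (hcov : ∀ p ∈ M, p.1 ⋖ p.2) (hM2 : ∀ a a' b, (a, b) ∈ M → (a', b) ∈ M → a = a') :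
    Injective fun x => (matchTop M x, rk x) := by
  intro x y h
  simp only [Prod.mk.injEq] at h
  obtain ⟨htop, hrkxy⟩ := h
  have rk_top {z : P} (hz : (z, matchTop M z) ∈ M) : rk (matchTop M z) = rk z + 1 :=
    hrk _ _ (hcov _ hz)
  rcases matchTop_eq_self_or_mem (M := M) x with hx | hx <;>
    rcases matchTop_eq_self_or_mem (M := M) y with hy | hy
  · rw [← hx, htop, hy]
  · have := rk_top hy; rw [← htop, hx] at this; omega
  · have := rk_top hx; rw [htop, hy] at this; omega
  · exact hM2 x y _ hx (htop ▸ hy)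

/-- The order in which the classes (matched pairs and unmatched elements), represented by their
tops, are listed. -/
def Precedes (rk : P → ℕ) (step : P → P → Prop) (u v : P) : Prop :=
  rk u < rk v ∨ rk u = rk v ∧ TransGen step v u

lemma precedes_isStrictOrder {rk : P → ℕ} {step : P → P → Prop}
    (hacyc : ∀ x, ¬ TransGen step x x) : IsStrictOrder P (Precedes rk step) where
  irrefl u := by
    rintro (h | ⟨-, h⟩)
    exacts [lt_irrefl _ h, hacyc u h]
  trans u v w := by
    rintro (huv | ⟨huv, hvu⟩) (hvw | ⟨hvw, hwv⟩)
    · exact Or.inl (huv.trans hvw)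
    · exact Or.inl (hvw ▸ huv)
    · exact Or.inl (huv ▸ hvw)
    · exact Or.inr ⟨huv.trans hvw, hwv.trans hvu⟩

lemma precedes_matchTop_of_covBy [PartialOrder P] {rk : P → ℕ} {step : P → P → Prop}
    (hrk : ∀ a b : P, a ⋖ b → rk b = rk a + 1) (hcov : ∀ p ∈ M, p.1 ⋖ p.2)
    (hstep : ∀ x y, step x y ↔ ((y ⋖ x ∧ (y, x) ∉ M) ∨ (x ⋖ y ∧ (x, y) ∈ M)))
    {a b : P} (hab : a ⋖ b) (hnM : (a, b) ∉ M) :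
    Precedes rk step (matchTop M a) (matchTop M b) := by
  have hrkab := hrk a b hab
  have rk_top {z : P} (hz : (z, matchTop M z) ∈ M) : rk (matchTop M z) = rk z + 1 :=
    hrk _ _ (hcov _ hz)
  rcases matchTop_eq_self_or_mem (M := M) a with ha | ha <;>
    rcases matchTop_eq_self_or_mem (M := M) b with hb | hb
  · left; rw [ha, hb]; omega
  · left; rw [ha, rk_top hb]; omega
  · right
    refine ⟨by rw [rk_top ha, hb]; omega, ?_⟩
    rw [hb]
    exact .head ((hstep b a).2 (Or.inl ⟨hab, hnM⟩))
      (.single ((hstep a _).2 (Or.inr ⟨hcov _ ha, ha⟩)))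
  · left; rw [rk_top ha, rk_top hb]; omega

end Matching

/-- Refined linear extension lemma for a graded poset: for an acyclic matching M on a
finite poset P with rank function rk, there is a linear extension of the order induced
by the modified Hasse diagram H_M (encoded by an injective f : P → ℕ increasing along
unmatched cover relations), in which matched pairs appear consecutively and which
refines the order by rank among matched pairs: if (a, b), (a', b') ∈ M and (a', b')
precedes (a, b), then rk b' ≤ rk b. -/
theorem stmt_13 {P : Type*} [Fintype P] [PartialOrder P]
    (rk : P → ℕ) (hrk : ∀ a b : P, a ⋖ b → rk b = rk a + 1)
    (M : Set (P × P)) (hcov : ∀ p ∈ M, p.1 ⋖ p.2)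
    (hM1 : ∀ a b b', (a, b) ∈ M → (a, b') ∈ M → b = b')
    (hM2 : ∀ a a' b, (a, b) ∈ M → (a', b) ∈ M → a = a')
    (hM3 : ∀ a b c, (a, b) ∈ M → (b, c) ∈ M → False)
    (step : P → P → Prop)
    (hstep : ∀ x y, step x y ↔ ((y ⋖ x ∧ (y, x) ∉ M) ∨ (x ⋖ y ∧ (x, y) ∈ M)))
    (hacyc : ∀ x, ¬ Relation.TransGen step x x) :
    ∃ f : P → ℕ, Function.Injective f ∧
      (∀ a b : P, a ⋖ b → (a, b) ∉ M → f a < f b) ∧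
      (∀ a b : P, (a, b) ∈ M → f b = f a + 1) ∧
      (∀ a b a' b' : P, (a, b) ∈ M → (a', b') ∈ M → f b' < f b → rk b' ≤ rk b) := by
  have := precedes_isStrictOrder (rk := rk) hacyc
  obtain ⟨g, hg_inj, hg_mono⟩ := exists_injective_nat_of_isStrictOrder (Precedes rk step)
  let key (x : P) : ℕ ×ₗ ℕ := toLex (g (matchTop M x), rk x)
  have key_inj : Injective key := toLex.injective.comp <|
    (hg_inj.prodMap injective_id).comp (injective_matchTop_rk hrk hcov hM2)
  refine ⟨position key, position_injective key_inj, fun a b hab hnM => ?_, fun a b hab => ?_,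
    fun a b a' b' hab hab' hlt => ?_⟩
  · exact position_lt_position <| Prod.Lex.toLex_lt_toLex.2 <| Or.inl <|
      hg_mono (precedes_matchTop_of_covBy hrk hcov hstep hab hnM)
  · refine position_eq_add_one_of_covBy key_inj (Prod.Lex.toLex_covBy_toLex_iff.2 (Or.inl ⟨?_, ?_⟩))
    · rw [matchTop_eq_of_mem hM1 hab, matchTop_eq_self_of_mem hM3 hab]
    · rw [hrk a b (hcov _ hab)]; exact Order.covBy_add_one _
  · by_contra! hrank
    have hkey : key b < key b' := Prod.Lex.toLex_lt_toLex.2 <| Or.inl <| hg_mono <| by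
      rw [matchTop_eq_self_of_mem hM3 hab, matchTop_eq_self_of_mem hM3 hab']
      exact Or.inl hrank
    exact (position_lt_position hkey).not_gt hlt
end

section
/- Let q = 2k be a positive even integer. In the free group F(x,y), the element y⁻²x^(−2k)yx^(2k) lies in the same normal closure as y⁻¹x^(−k) modulo the relator x⁻²y⁻¹xy; consequently the normal closure of {x⁻²y⁻¹xy, y⁻²x^(−2k)yx^(2k)} equals the normal closure of {x, yx^k} and hence equals all of F(x,y). -/
/-!
The relator x⁻²y⁻¹xy says y⁻¹xy = x², hence y⁻¹xⁿy = x²ⁿ for every n. Substituting this into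
y⁻²x⁻ᵐyxᵐ collapses it to y⁻¹x⁻ᵐ, so y is a power of x. Then y commutes with x, and the first
relator becomes x = x²: both generators are trivial. Applied in the quotient of F(x, y) by each of
the three normal closures, this shows that all three are the whole free group.
-/

open Subgroup

universe u

theorem FreeGroup.normalClosure_eq_top_of_forall_lift_eq_one {α : Type u} {S : Set (FreeGroup α)}
    (h : ∀ {G : Type u} [Group G] (f : α → G), (∀ r ∈ S, lift f r = 1) → ∀ a, f a = 1) :
    normalClosure S = ⊤ := by
  let π := QuotientGroup.mk' (normalClosure S)
  have hπ : ∀ a, π (of a) = 1 := h (fun a => π (of a)) fun r hr => by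
    rw [← lift_unique π fun _ => rfl, QuotientGroup.mk'_apply, QuotientGroup.eq_one_iff]
    exact subset_normalClosure hr
  rw [eq_top_iff, ← closure_range_of, closure_le]
  rintro _ ⟨a, rfl⟩
  exact (QuotientGroup.eq_one_iff _).1 (hπ a)

section
variable {G : Type*} [Group G] {X Y : G}

theorem conj_eq_sq_of_gordon_relator (h : X⁻¹ * X⁻¹ * Y⁻¹ * X * Y = 1) : Y⁻¹ * X * Y = X ^ 2 := by
  calc Y⁻¹ * X * Y = X ^ 2 * (X⁻¹ * X⁻¹ * Y⁻¹ * X * Y) := by group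
    _ = X ^ 2 := by rw [h, mul_one]

theorem conj_zpow_of_conj_eq_sq (h : Y⁻¹ * X * Y = X ^ 2) (n : ℤ) :
    Y⁻¹ * X ^ n * Y = X ^ (2 * n) := by
  have hconj := conj_zpow (a := Y⁻¹) (b := X) (i := n)
  rw [inv_inv] at hconj
  rw [← hconj, h, ← zpow_natCast, ← zpow_mul, Nat.cast_ofNat, mul_comm]

theorem eq_zpow_neg_of_conj_eq_sq (h : Y⁻¹ * X * Y = X ^ 2) {m : ℤ}
    (h' : Y⁻¹ * Y⁻¹ * X ^ (-m) * Y * X ^ m = 1) : Y = X ^ (-m) := by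
  refine inv_mul_eq_one.1 ?_
  calc Y⁻¹ * X ^ (-m)
      = Y⁻¹ * X ^ (2 * -m) * X ^ m := by rw [mul_assoc, ← zpow_add]; ring_nf
    _ = Y⁻¹ * Y⁻¹ * X ^ (-m) * Y * X ^ m := by rw [← conj_zpow_of_conj_eq_sq h]; group
    _ = 1 := h'

theorem eq_one_of_conj_eq_sq_of_eq_zpow (h : Y⁻¹ * X * Y = X ^ 2) {n : ℤ} (hY : Y = X ^ n) :
    X = 1 ∧ Y = 1 := by
  have hXY : Commute X Y := hY ▸ (Commute.refl X).zpow_right n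
  rw [mul_assoc, hXY.eq, inv_mul_cancel_left, pow_two] at h
  have hX : X = 1 := mul_eq_left.1 h.symm
  exact ⟨hX, by rw [hY, hX, one_zpow]⟩

theorem eq_one_of_gordon_relators {m : ℤ} (h₁ : X⁻¹ * X⁻¹ * Y⁻¹ * X * Y = 1)
    (h₂ : Y⁻¹ * Y⁻¹ * X ^ (-m) * Y * X ^ m = 1) : X = 1 ∧ Y = 1 :=
  have hconj := conj_eq_sq_of_gordon_relator h₁
  eq_one_of_conj_eq_sq_of_eq_zpow hconj (eq_zpow_neg_of_conj_eq_sq hconj h₂)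

theorem eq_one_of_gordon_relator_of_inv_mul_zpow_eq_one {n : ℤ}
    (h₁ : X⁻¹ * X⁻¹ * Y⁻¹ * X * Y = 1) (h₂ : Y⁻¹ * X ^ n = 1) : X = 1 ∧ Y = 1 :=
  eq_one_of_conj_eq_sq_of_eq_zpow (conj_eq_sq_of_gordon_relator h₁) (inv_mul_eq_one.1 h₂)

end

theorem stmt_15_general (k : ℕ) :
    Subgroup.normalClosure
        ({(FreeGroup.of true)⁻¹ * (FreeGroup.of true)⁻¹ * (FreeGroup.of false)⁻¹ *
            FreeGroup.of true * FreeGroup.of false,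
          (FreeGroup.of false)⁻¹ * (FreeGroup.of false)⁻¹ *
            FreeGroup.of true ^ (-(2 * (k : ℤ))) * FreeGroup.of false *
            FreeGroup.of true ^ (2 * (k : ℤ))} : Set (FreeGroup Bool)) =
      Subgroup.normalClosure
        {(FreeGroup.of true)⁻¹ * (FreeGroup.of true)⁻¹ * (FreeGroup.of false)⁻¹ *
            FreeGroup.of true * FreeGroup.of false,
          (FreeGroup.of false)⁻¹ * FreeGroup.of true ^ (-(k : ℤ))} ∧
    Subgroup.normalClosure
        ({(FreeGroup.of true)⁻¹ * (FreeGroup.of true)⁻¹ * (FreeGroup.of false)⁻¹ *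
            FreeGroup.of true * FreeGroup.of false,
          (FreeGroup.of false)⁻¹ * (FreeGroup.of false)⁻¹ *
            FreeGroup.of true ^ (-(2 * (k : ℤ))) * FreeGroup.of false *
            FreeGroup.of true ^ (2 * (k : ℤ))} : Set (FreeGroup Bool)) =
      Subgroup.normalClosure
        {FreeGroup.of true, FreeGroup.of false * FreeGroup.of true ^ (k : ℤ)} ∧
    Subgroup.normalClosure
        ({(FreeGroup.of true)⁻¹ * (FreeGroup.of true)⁻¹ * (FreeGroup.of false)⁻¹ *
            FreeGroup.of true * FreeGroup.of false,
          (FreeGroup.of false)⁻¹ * (FreeGroup.of false)⁻¹ *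
            FreeGroup.of true ^ (-(2 * (k : ℤ))) * FreeGroup.of false *
            FreeGroup.of true ^ (2 * (k : ℤ))} : Set (FreeGroup Bool)) =
      (⊤ : Subgroup (FreeGroup Bool)) := by
  rw [FreeGroup.normalClosure_eq_top_of_forall_lift_eq_one ?gordon,
    FreeGroup.normalClosure_eq_top_of_forall_lift_eq_one ?reduced,
    FreeGroup.normalClosure_eq_top_of_forall_lift_eq_one ?generators]
  · exact ⟨rfl, rfl, rfl⟩
  all_goals
    intro G _ f hf
    simp only [Set.mem_insert_iff, Set.mem_singleton_iff, forall_eq_or_imp, forall_eq, map_mul,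
      map_inv, map_zpow, FreeGroup.lift_apply_of] at hf
    rw [Bool.forall_bool, and_comm]
  case gordon => exact eq_one_of_gordon_relators hf.1 hf.2
  case reduced => exact eq_one_of_gordon_relator_of_inv_mul_zpow_eq_one hf.1 hf.2
  case generators =>
    obtain ⟨hx, hyx⟩ := hf
    exact ⟨hx, by rwa [hx, one_zpow, mul_one] at hyx⟩

/-- The even case of Gordon's presentations G_q, q = 2k: in F(x, y) (with x = of true,
y = of false), modulo the relator x⁻²y⁻¹xy, the relator y⁻²x^(−2k)yx^(2k) is
equivalent to y⁻¹x^(−k); consequently the normal closure of the two relators equals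
the normal closure of {x, yxᵏ}, and hence is all of F(x, y). -/
theorem stmt_15 (k : ℕ) (hk : 0 < k) :
    Subgroup.normalClosure
        ({(FreeGroup.of true)⁻¹ * (FreeGroup.of true)⁻¹ * (FreeGroup.of false)⁻¹ *
            FreeGroup.of true * FreeGroup.of false,
          (FreeGroup.of false)⁻¹ * (FreeGroup.of false)⁻¹ *
            FreeGroup.of true ^ (-(2 * (k : ℤ))) * FreeGroup.of false *
            FreeGroup.of true ^ (2 * (k : ℤ))} : Set (FreeGroup Bool)) =
      Subgroup.normalClosure
        {(FreeGroup.of true)⁻¹ * (FreeGroup.of true)⁻¹ * (FreeGroup.of false)⁻¹ *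
            FreeGroup.of true * FreeGroup.of false,
          (FreeGroup.of false)⁻¹ * FreeGroup.of true ^ (-(k : ℤ))} ∧
    Subgroup.normalClosure
        ({(FreeGroup.of true)⁻¹ * (FreeGroup.of true)⁻¹ * (FreeGroup.of false)⁻¹ *
            FreeGroup.of true * FreeGroup.of false,
          (FreeGroup.of false)⁻¹ * (FreeGroup.of false)⁻¹ *
            FreeGroup.of true ^ (-(2 * (k : ℤ))) * FreeGroup.of false *
            FreeGroup.of true ^ (2 * (k : ℤ))} : Set (FreeGroup Bool)) =
      Subgroup.normalClosure
        {FreeGroup.of true, FreeGroup.of false * FreeGroup.of true ^ (k : ℤ)} ∧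
    Subgroup.normalClosure
        ({(FreeGroup.of true)⁻¹ * (FreeGroup.of true)⁻¹ * (FreeGroup.of false)⁻¹ *
            FreeGroup.of true * FreeGroup.of false,
          (FreeGroup.of false)⁻¹ * (FreeGroup.of false)⁻¹ *
            FreeGroup.of true ^ (-(2 * (k : ℤ))) * FreeGroup.of false *
            FreeGroup.of true ^ (2 * (k : ℤ))} : Set (FreeGroup Bool)) =
      (⊤ : Subgroup (FreeGroup Bool)) :=
  stmt_15_general k
end
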